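/- Fix δ ∈ (0,1). There exists ε₀ > 0 such that for every ε ∈ (0, ε₀) there is N₀ with the following property for all integers N ≥ N₀: write ρ := 1 − N^{−δ}, and let K_ε ∈ ℕ satisfy ( ρ(1−ρ) )^{1/2^{K_ε}} ≤ ε ≤ ( ρ(1−ρ) )^{1/2^{K_ε+1}}. Then p_{K_ε}^{(N,δ)} ≥ ρ · (1 − 3ε/√ρ)² · ε². -/

import Mathlib

/-!
Write `S_k := ∑_{ℓ ≤ k} p_ℓ` and `u_k := (ρ(1-ρ))^{1/2^k}`, so that `u_0 = ρ p_0` and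
`u_{k+1} = √u_k`. Each step of the recursion takes the nonnegative root of
`p² + a p = ρ p_k` with `a = ρ - 1 + 2 S_k ≥ 0`, hence `√(ρ p_k) - S_k ≤ p_{k+1} ≤ √(ρ p_k)`.
The upper bound propagates to `ρ p_k ≤ u_k`, and then `S_k ≤ 2 u_k` while `u_k ≤ 1/2`.
With `c := √ρ - 3ε`, the lower bound propagates `c² u_k ≤ p_k`: it gives
`p_{k+1} ≥ √ρ c u_{k+1} - 2 u_{k+1}² = c² u_{k+1} + u_{k+1} (3εc - 2u_{k+1})`, which is at least
`c² u_{k+1}` as long as `u_{k+1} ≤ ε` and `c ≥ 2/3`. Finally `ε² ≤ u_{K+1}² = u_K` and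
`ρ (1 - 3ε/√ρ)² = c²`; taking `N` large only serves to make `ρ` close to `1`.
-/

open Filter Finset

namespace MullerRatchet18

/-- Auxiliary recursion computing the pair `(p_k, Σ_{ℓ≤k} p_ℓ)` of the equilibrium
type-frequency weights of the tournament ratchet. -/
noncomputable def pAux (ρ : ℝ) : ℕ → ℝ × ℝ
  | 0 => (1 - ρ, 1 - ρ)
  | k+1 =>
    let a := ρ - 1 + 2 * (pAux ρ k).2
    let p := -(1/2) * a + Real.sqrt ((1/4) * a^2 + ρ * (pAux ρ k).1)
    (p, (pAux ρ k).2 + p)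

/-- The equilibrium weight `p_k^{(ρ)}`. -/
noncomputable def pseq (ρ : ℝ) (k : ℕ) : ℝ := (pAux ρ k).1

/-- The nonnegative root of `p ^ 2 + a * p = x`. -/
noncomputable def posRoot (a x : ℝ) : ℝ := -(1 / 2) * a + √((1 / 4) * a ^ 2 + x)

lemma posRoot_nonneg (a : ℝ) {x : ℝ} (hx : 0 ≤ x) : 0 ≤ posRoot a x := by
  have : a / 2 ≤ √((1 / 4) * a ^ 2 + x) := Real.le_sqrt_of_sq_le (by linarith)
  unfold posRoot
  linarith

lemma posRoot_le_sqrt {a x : ℝ} (ha : 0 ≤ a) (hx : 0 ≤ x) : posRoot a x ≤ √x := by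
  have : √((1 / 4) * a ^ 2 + x) ≤ a / 2 + √x :=
    Real.sqrt_le_iff.2 ⟨by positivity, by nlinarith [Real.sq_sqrt hx, Real.sqrt_nonneg x]⟩
  unfold posRoot
  linarith

lemma sqrt_sub_half_le_posRoot (a x : ℝ) : √x - a / 2 ≤ posRoot a x := by
  have : √x ≤ √((1 / 4) * a ^ 2 + x) := Real.sqrt_le_sqrt (by nlinarith [sq_nonneg a])
  unfold posRoot
  linarith

section Ratchet

variable {ρ : ℝ}

lemma pAux_snd_eq_sum (ρ : ℝ) (k : ℕ) : (pAux ρ k).2 = ∑ ℓ ∈ range (k + 1), pseq ρ ℓ := by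
  induction k with
  | zero => rw [sum_range_one]; rfl
  | succ k ih => rw [sum_range_succ, ← ih]; rfl

lemma pseq_zero (ρ : ℝ) : pseq ρ 0 = 1 - ρ := rfl

lemma pseq_succ (ρ : ℝ) (k : ℕ) :
    pseq ρ (k + 1) = posRoot (ρ - 1 + 2 * ∑ ℓ ∈ range (k + 1), pseq ρ ℓ) (ρ * pseq ρ k) := by
  rw [← pAux_snd_eq_sum]; rfl

lemma pseq_nonneg (h0 : 0 ≤ ρ) (h1 : ρ ≤ 1) : ∀ k, 0 ≤ pseq ρ k
  | 0 => sub_nonneg.2 h1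
  | k + 1 => by
    rw [pseq_succ]
    exact posRoot_nonneg _ (mul_nonneg h0 (pseq_nonneg h0 h1 k))

lemma one_sub_le_sum_pseq (h0 : 0 ≤ ρ) (h1 : ρ ≤ 1) (k : ℕ) :
    1 - ρ ≤ ∑ ℓ ∈ range (k + 1), pseq ρ ℓ :=
  single_le_sum (fun ℓ _ ↦ pseq_nonneg h0 h1 ℓ) (mem_range.2 k.succ_pos)

lemma pseq_succ_le_sqrt (h0 : 0 ≤ ρ) (h1 : ρ ≤ 1) (k : ℕ) :
    pseq ρ (k + 1) ≤ √(ρ * pseq ρ k) := by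
  rw [pseq_succ]
  exact posRoot_le_sqrt (by linarith [one_sub_le_sum_pseq h0 h1 k])
    (mul_nonneg h0 (pseq_nonneg h0 h1 k))

lemma sqrt_sub_sum_le_pseq_succ (h1 : ρ ≤ 1) (k : ℕ) :
    √(ρ * pseq ρ k) - ∑ ℓ ∈ range (k + 1), pseq ρ ℓ ≤ pseq ρ (k + 1) := by
  rw [pseq_succ]
  linarith [sqrt_sub_half_le_posRoot (ρ - 1 + 2 * ∑ ℓ ∈ range (k + 1), pseq ρ ℓ) (ρ * pseq ρ k)]

end Ratchet

noncomputable def iterSqrt (q : ℝ) (k : ℕ) : ℝ := q ^ (1 / (2 : ℝ) ^ k)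

section IterSqrt

variable {q : ℝ}

lemma iterSqrt_zero (q : ℝ) : iterSqrt q 0 = q := by simp [iterSqrt]

lemma iterSqrt_nonneg (hq : 0 ≤ q) (k : ℕ) : 0 ≤ iterSqrt q k := Real.rpow_nonneg hq _

lemma sqrt_iterSqrt (hq : 0 ≤ q) (k : ℕ) : √(iterSqrt q k) = iterSqrt q (k + 1) := by
  rw [Real.sqrt_eq_rpow, iterSqrt, iterSqrt, ← Real.rpow_mul hq, pow_succ]
  congr 1
  field_simp

lemma iterSqrt_succ_sq (hq : 0 ≤ q) (k : ℕ) : iterSqrt q (k + 1) ^ 2 = iterSqrt q k := by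
  rw [← sqrt_iterSqrt hq, Real.sq_sqrt (iterSqrt_nonneg hq k)]

lemma iterSqrt_le_one (hq0 : 0 ≤ q) (hq1 : q ≤ 1) (k : ℕ) : iterSqrt q k ≤ 1 :=
  Real.rpow_le_one hq0 hq1 (by positivity)

lemma iterSqrt_monotone (hq0 : 0 ≤ q) (hq1 : q ≤ 1) : Monotone (iterSqrt q) :=
  monotone_nat_of_le_succ fun k ↦ by
    rw [← iterSqrt_succ_sq hq0 k]
    exact sq_le (iterSqrt_nonneg hq0 _) (iterSqrt_le_one hq0 hq1 _)

end IterSqrt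

section Bounds

variable {ρ : ℝ}

lemma mul_one_sub_nonneg (h0 : 0 ≤ ρ) (h1 : ρ ≤ 1) : 0 ≤ ρ * (1 - ρ) :=
  mul_nonneg h0 (sub_nonneg.2 h1)

lemma mul_one_sub_le_one (h0 : 0 ≤ ρ) (h1 : ρ ≤ 1) : ρ * (1 - ρ) ≤ 1 := by nlinarith

lemma pseq_succ_le_iterSqrt_of_mul_le (h0 : 0 ≤ ρ) (h1 : ρ ≤ 1) {k : ℕ}
    (hk : ρ * pseq ρ k ≤ iterSqrt (ρ * (1 - ρ)) k) :
    pseq ρ (k + 1) ≤ iterSqrt (ρ * (1 - ρ)) (k + 1) := by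
  rw [← sqrt_iterSqrt (mul_one_sub_nonneg h0 h1)]
  exact (pseq_succ_le_sqrt h0 h1 k).trans (Real.sqrt_le_sqrt hk)

lemma mul_pseq_le_iterSqrt (h0 : 0 ≤ ρ) (h1 : ρ ≤ 1) (k : ℕ) :
    ρ * pseq ρ k ≤ iterSqrt (ρ * (1 - ρ)) k := by
  induction k with
  | zero => rw [iterSqrt_zero, pseq_zero]
  | succ k ih =>
    exact (mul_le_of_le_one_left (pseq_nonneg h0 h1 _) h1).trans
      (pseq_succ_le_iterSqrt_of_mul_le h0 h1 ih)

lemma sum_pseq_le_two_mul_iterSqrt (hρ : 1 / 2 ≤ ρ) (h1 : ρ ≤ 1) (k : ℕ)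
    (hk : iterSqrt (ρ * (1 - ρ)) k ≤ 1 / 2) :
    ∑ ℓ ∈ range (k + 1), pseq ρ ℓ ≤ 2 * iterSqrt (ρ * (1 - ρ)) k := by
  have h0 : 0 ≤ ρ := by linarith
  have hq0 := mul_one_sub_nonneg h0 h1
  induction k with
  | zero =>
    rw [sum_range_one, pseq_zero, iterSqrt_zero]
    nlinarith
  | succ k ih =>
    have hsum := ih ((iterSqrt_monotone hq0 (mul_one_sub_le_one h0 h1) k.le_succ).trans hk)
    have hstep := pseq_succ_le_iterSqrt_of_mul_le h0 h1 (mul_pseq_le_iterSqrt h0 h1 k)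
    rw [← iterSqrt_succ_sq hq0 k] at hsum
    rw [sum_range_succ]
    nlinarith [iterSqrt_nonneg hq0 (k + 1)]

lemma sq_mul_iterSqrt_le_pseq {ε : ℝ} (hρ : 1 / 2 ≤ ρ) (h1 : ρ ≤ 1) (hc : 2 / 3 ≤ √ρ - 3 * ε)
    (k : ℕ) (hk : iterSqrt (ρ * (1 - ρ)) k ≤ ε) :
    (√ρ - 3 * ε) ^ 2 * iterSqrt (ρ * (1 - ρ)) k ≤ pseq ρ k := by
  have h0 : 0 ≤ ρ := by linarith
  have hq0 := mul_one_sub_nonneg h0 h1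
  have hsqrt : √ρ ≤ 1 := Real.sqrt_le_one.2 h1
  set c := √ρ - 3 * ε with hc_def
  induction k with
  | zero =>
    rw [iterSqrt_zero, pseq_zero]
    have hc1 : c ≤ 1 := by linarith [(iterSqrt_nonneg hq0 0).trans hk]
    have hc2 : c ^ 2 ≤ 1 := by nlinarith
    nlinarith [mul_le_mul_of_nonneg_right hc2 hq0]
  | succ k ih =>
    set u := iterSqrt (ρ * (1 - ρ)) (k + 1)
    have hu0 : 0 ≤ u := iterSqrt_nonneg hq0 _
    have hu_sq : u ^ 2 = iterSqrt (ρ * (1 - ρ)) k := iterSqrt_succ_sq hq0 k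
    have hlow := ih ((iterSqrt_monotone hq0 (mul_one_sub_le_one h0 h1) k.le_succ).trans hk)
    have hsum := sum_pseq_le_two_mul_iterSqrt hρ h1 k (by nlinarith)
    have hsqrt_step : √ρ * c * u ≤ √(ρ * pseq ρ k) := by
      apply Real.le_sqrt_of_sq_le
      rw [mul_pow, mul_pow, Real.sq_sqrt h0, hu_sq, mul_assoc]
      exact mul_le_mul_of_nonneg_left hlow h0
    have hstep := sqrt_sub_sum_le_pseq_succ h1 k
    have hgap : 2 * u ≤ 3 * ε * c := by nlinarith
    rw [← hu_sq] at hsum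
    nlinarith [mul_nonneg hu0 (sub_nonneg.2 hgap)]

end Bounds

theorem statement18_general (δ : ℝ) (hδ0 : 0 < δ) :
    ∃ ε₀ > (0:ℝ), ∀ ε : ℝ, 0 < ε → ε < ε₀ → ∃ N₀ : ℕ, ∀ N : ℕ, N₀ ≤ N →
      ∀ Kε : ℕ,
        ((1 - (N:ℝ)^(-δ)) * (N:ℝ)^(-δ)) ^ (1 / (2:ℝ)^Kε) ≤ ε →
        ε ≤ ((1 - (N:ℝ)^(-δ)) * (N:ℝ)^(-δ)) ^ (1 / (2:ℝ)^(Kε+1)) →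
        (1 - (N:ℝ)^(-δ)) * (1 - 3*ε / Real.sqrt (1 - (N:ℝ)^(-δ)))^2 * ε^2
          ≤ pseq (1 - (N:ℝ)^(-δ)) Kε := by
  obtain ⟨N₀, hN₀⟩ : ∃ N₀ : ℕ, ∀ N ≥ N₀, (N : ℝ) ^ (-δ) ≤ 1 / 4 :=
    eventually_atTop.1 <| ((tendsto_rpow_neg_atTop hδ0).comp tendsto_natCast_atTop_atTop).eventually
      (ge_mem_nhds (by norm_num))
  refine ⟨1 / 36, by norm_num, fun ε hε hε₀ ↦ ⟨N₀, fun N hN K hK hK1 ↦ ?_⟩⟩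
  have hr : 1 - (1 - (N : ℝ) ^ (-δ)) = (N : ℝ) ^ (-δ) := sub_sub_cancel _ _
  set ρ := 1 - (N : ℝ) ^ (-δ)
  rw [← hr] at hK hK1
  have hρ : 3 / 4 ≤ ρ := by linarith [hN₀ N hN]
  have hρ1 : ρ ≤ 1 := by linarith [Real.rpow_nonneg N.cast_nonneg (-δ)]
  have hsqrt : 3 / 4 ≤ √ρ := Real.le_sqrt_of_sq_le (by linarith)
  have hc : ρ * (1 - 3 * ε / √ρ) ^ 2 = (√ρ - 3 * ε) ^ 2 := by
    rw [← Real.sq_sqrt (by linarith : 0 ≤ ρ), ← mul_pow, Real.sqrt_sq (by linarith), mul_sub,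
      mul_one, mul_div_cancel₀ _ (by positivity)]
  have hεK : ε ^ 2 ≤ iterSqrt (ρ * (1 - ρ)) K := by
    rw [← iterSqrt_succ_sq (mul_one_sub_nonneg (by linarith) hρ1)]
    exact pow_le_pow_left₀ hε.le hK1 2
  calc ρ * (1 - 3 * ε / √ρ) ^ 2 * ε ^ 2 = (√ρ - 3 * ε) ^ 2 * ε ^ 2 := by rw [hc]
    _ ≤ (√ρ - 3 * ε) ^ 2 * iterSqrt (ρ * (1 - ρ)) K := by gcongr
    _ ≤ pseq ρ K := sq_mul_iterSqrt_le_pseq (by linarith) hρ1 (by linarith) K hK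

/-- With `ρ = 1 − N^{−δ}` and `K_ε` defined by
`(ρ(1−ρ))^{1/2^{K_ε}} ≤ ε ≤ (ρ(1−ρ))^{1/2^{K_ε+1}}`, one has
`p_{K_ε}^{(N,δ)} ≥ ρ(1 − 3ε/√ρ)² ε²`. -/
theorem statement18 (δ : ℝ) (hδ0 : 0 < δ) (hδ1 : δ < 1) :
    ∃ ε₀ > (0:ℝ), ∀ ε : ℝ, 0 < ε → ε < ε₀ → ∃ N₀ : ℕ, ∀ N : ℕ, N₀ ≤ N →
      ∀ Kε : ℕ,
        ((1 - (N:ℝ)^(-δ)) * (N:ℝ)^(-δ)) ^ (1 / (2:ℝ)^Kε) ≤ ε →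
        ε ≤ ((1 - (N:ℝ)^(-δ)) * (N:ℝ)^(-δ)) ^ (1 / (2:ℝ)^(Kε+1)) →
        (1 - (N:ℝ)^(-δ)) * (1 - 3*ε / Real.sqrt (1 - (N:ℝ)^(-δ)))^2 * ε^2
          ≤ pseq (1 - (N:ℝ)^(-δ)) Kε :=
  statement18_general δ hδ0

end MullerRatchet18
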